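/- Let T be an alternating base tree, t a vertex with orthodox parity odd, t' a child of t such that {t,t'} ∉ M, and e any edge incident to a vertex of the subtree T(t'). Then vlevel(e) > vlevel(e*(t)), where e*(t) is a minimum-level incoming edge of T(t). -/

import Mathlib

open SimpleGraph
open scoped Classical

variable {V : Type*} [Fintype V] [DecidableEq V]

/-- A matching system `(G, M)` in which a super free vertex `f` has been added:
`U` is the set of free vertices of the original system, and for each `u ∈ U`
the vertex `mid u` forms the length-two alternating path `f - mid u - u`
(with `{f, mid u} ∉ M` and `{mid u, u} ∈ M`).  After the addition, `f` is the
unique free vertex. -/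
structure Sys (V : Type*) [Fintype V] [DecidableEq V] where
  G : SimpleGraph V
  M : Set (Sym2 V)
  f : V
  U : Set V
  mid : V → V
  M_sub : M ⊆ G.edgeSet
  matching : ∀ v : V, ∀ e₁ ∈ M, ∀ e₂ ∈ M, v ∈ e₁ → v ∈ e₂ → e₁ = e₂
  f_free : ∀ e ∈ M, f ∉ e
  others_matched : ∀ v : V, v ≠ f → ∃ e ∈ M, v ∈ e
  U_spec : ∀ u ∈ U, G.Adj f (mid u) ∧ s(f, mid u) ∉ M ∧ G.Adj (mid u) u ∧ s(mid u, u) ∈ M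
  mid_deg : ∀ u ∈ U, ∀ w : V, G.Adj (mid u) w → w = f ∨ w = u
  f_adj : ∀ w : V, G.Adj f w → ∃ u ∈ U, w = mid u
  mid_inj : ∀ u ∈ U, ∀ u' ∈ U, mid u = mid u' → u = u'

namespace Sys

variable (S : Sys V)

/-- An alternating path of the matching system: a simple path whose consecutive
edges alternate membership in `M`. -/
def IsAltPath {a b : V} (p : S.G.Walk a b) : Prop :=
  p.IsPath ∧ List.Chain' (fun e₁ e₂ => (e₁ ∈ S.M ↔ e₂ ∉ S.M)) p.edges

/-- `adist S θ u` is the length of a shortest alternating path from `f` to `u`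
whose length has parity `θ` (`true` = odd, `false` = even); `⊤` if none exists. -/
noncomputable def adist (θ : Bool) (u : V) : ℕ∞ :=
  sInf {n : ℕ∞ | ∃ p : S.G.Walk S.f u,
    S.IsAltPath p ∧ (p.length : ℕ∞) = n ∧ (Odd p.length ↔ θ = true)}

/-- The orthodox parity `α(u)` of `u`: the parity with smaller alternating distance. -/
noncomputable def op (u : V) : Bool :=
  if S.adist true u < S.adist false u then true else false

/-- The orthodox distance `dist^α(u)`. -/
noncomputable def distOrth (u : V) : ℕ∞ := S.adist (S.op u) u

/-- The unorthodox distance `dist^β(u)`. -/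
noncomputable def distUnorth (u : V) : ℕ∞ := S.adist (!S.op u) u

/-- `ρ(e)`: `true` (= odd) iff `e` is a matching edge. -/
noncomputable def rho (e : Sym2 V) : Bool := if e ∈ S.M then true else false

/-- `EP(u)`: the set of edges `e` incident to `u` such that some shortest orthodox
alternating path from `f` to `u` terminates with `e`. -/
def EP (u : V) : Set (Sym2 V) :=
  {e | ∃ p : S.G.Walk S.f u, S.IsAltPath p ∧ (p.length : ℕ∞) = S.distOrth u ∧
        p.edges.getLast? = some e}

/-- `P(u)`: the set of immediate predecessors of `u` on shortest orthodox
alternating paths. -/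
def Pset (u : V) : Set V := {u' | s(u', u) ∈ S.EP u}

/-- `EP = ⋃_u EP(u)`. -/
def EPall : Set (Sym2 V) := ⋃ u : V, S.EP u

/-- The volume `vlevel(e) = dist^{ρ(e)}(y) + dist^{ρ(e)}(z) + 1` of an edge `e = {y,z}`. -/
noncomputable def vlevel (e : Sym2 V) : ℕ∞ :=
  Sym2.lift ⟨fun y z => S.adist (S.rho e) y + S.adist (S.rho e) z + 1,
    fun y z => by ring⟩ e

/-- The height `hlevel(e) = max (dist^{ρ(e)}(y)) (dist^{ρ(e)}(z))` of an edge `e = {y,z}`. -/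
noncomputable def hlevel (e : Sym2 V) : ℕ∞ :=
  Sym2.lift ⟨fun y z => max (S.adist (S.rho e) y) (S.adist (S.rho e) z),
    fun y z => max_comm _ _⟩ e

/-- The level `level(e) = n' · vlevel(e) + hlevel(e)` with `n' = |V| + 1 > |V|`,
giving the lexicographic order on (volume, height). -/
noncomputable def level (e : Sym2 V) : ℕ∞ :=
  ((Fintype.card V + 1 : ℕ) : ℕ∞) * S.vlevel e + S.hlevel e

/-- An augmenting path: an alternating path connecting two distinct vertices of `U`,
starting and ending with non-matching edges. -/
def IsAugPath {a b : V} (p : S.G.Walk a b) : Prop :=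
  S.IsAltPath p ∧ a ∈ S.U ∧ b ∈ S.U ∧ a ≠ b ∧
  (∀ e, p.edges.head? = some e → e ∉ S.M) ∧ (∀ e, p.edges.getLast? = some e → e ∉ S.M)

/-- The length of shortest augmenting paths of the system is `L`. -/
def ShortestAugLen (L : ℕ) : Prop :=
  (∃ a b : V, ∃ p : S.G.Walk a b, S.IsAugPath p ∧ p.length = L) ∧
  (∀ a b : V, ∀ p : S.G.Walk a b, S.IsAugPath p → L ≤ p.length)

/-- Vertices of the alternating base DAG `H`: all vertices except `f` and its neighbors. -/
def inH (v : V) : Prop := v ≠ S.f ∧ ¬ S.G.Adj S.f v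

/-- The edge relation of the alternating base DAG `H`: an edge from `u` to `v`
iff `v ∈ P(u)` (upward orientation); vertices of `U` are sinks. -/
def HStep (u v : V) : Prop := S.inH u ∧ S.inH v ∧ u ∉ S.U ∧ v ∈ S.Pset u

end Sys

/-- An alternating base tree of `S`: every non-root vertex has its parent chosen
from `P(u)`; the root is the super free vertex `f`. -/
structure ABT (S : Sys V) where
  par : V → V
  par_f : par S.f = S.f
  par_mem : ∀ u : V, u ≠ S.f → par u ∈ S.Pset u

namespace ABT

variable {S : Sys V} (T : ABT S)

/-- `v` belongs to the subtree `T(t)` rooted at `t`. -/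
def inSub (t v : V) : Prop := ∃ n : ℕ, T.par^[n] v = t

/-- `e` is a tree edge of `T`. -/
def IsTreeEdge (e : Sym2 V) : Prop := ∃ u : V, u ≠ S.f ∧ e = s(u, T.par u)

/-- `e` is an incoming edge of the subtree `T(t)`: a non-tree edge of `G` with
exactly one endpoint inside `T(t)`. -/
def Incoming (t : V) (e : Sym2 V) : Prop :=
  e ∈ S.G.edgeSet ∧ ¬ T.IsTreeEdge e ∧
  ∃ y z : V, e = s(y, z) ∧ T.inSub t z ∧ ¬ T.inSub t y

/-- `e` is a minimum-level incoming edge (MIE) of `T(t)`. -/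
def IsMIE (t : V) (e : Sym2 V) : Prop :=
  T.Incoming t e ∧ ∀ e', T.Incoming t e' → S.level e ≤ S.level e'

/-- `e` is a minimum-volume incoming edge of `T(t)`. -/
def IsMinVolIncoming (t : V) (e : Sym2 V) : Prop :=
  T.Incoming t e ∧ ∀ e', T.Incoming t e' → S.vlevel e ≤ S.vlevel e'

/-- The level of a path w.r.t. `T`: the maximum level of its non-tree edges
(`0` if it contains none). -/
noncomputable def pathLevel {a b : V} (p : S.G.Walk a b) : ℕ∞ :=
  sSup {x : ℕ∞ | ∃ e ∈ p.edges, ¬ T.IsTreeEdge e ∧ x = S.level e}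

/-- The volume of a path w.r.t. `T`: the maximum volume of its non-tree edges
(`0` if it contains none). -/
noncomputable def pathVlevel {a b : V} (p : S.G.Walk a b) : ℕ∞ :=
  sSup {x : ℕ∞ | ∃ e ∈ p.edges, ¬ T.IsTreeEdge e ∧ x = S.vlevel e}

end ABT

/-- An edge is crossable if its volume is `2ℓ+5` and some alternating base tree
puts its endpoints into subtrees rooted at two distinct free vertices. -/
def Sys.Crossable (S : Sys V) (ℓ : ℕ) (e : Sym2 V) : Prop :=
  S.vlevel e = ((2 * ℓ + 5 : ℕ) : ℕ∞) ∧
  ∃ T : ABT S, ∃ y z : V, e = s(y, z) ∧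
    ∃ uy ∈ S.U, ∃ uz ∈ S.U, uy ≠ uz ∧ T.inSub uy y ∧ T.inSub uz z

/-- `E*`: the set of crossable critical edges (crossable and not in `EP`). -/
def Sys.Estar (S : Sys V) (ℓ : ℕ) : Set (Sym2 V) :=
  {e | S.Crossable ℓ e ∧ e ∉ S.EPall}

/-- A (directed) path in the alternating base DAG `H`. -/
structure HPath (S : Sys V) where
  verts : List V
  ne : verts ≠ []
  chain : verts.Chain' S.HStep
  mem : ∀ v ∈ verts, S.inH v
  nodup : verts.Nodup

/-- The first vertex of an `H`-path. -/
def HPath.first {S : Sys V} (P : HPath S) : V := P.verts.head P.ne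

/-- The last vertex of an `H`-path. -/
def HPath.last {S : Sys V} (P : HPath S) : V := P.verts.getLast P.ne

/-- A double path `(P, Q, y, z)`: `{y,z} ∈ E*` and `P`, `Q` are vertex-disjoint
paths of `H` from `y` and `z` terminating at two distinct free vertices. -/
structure DoublePath (S : Sys V) (ℓ : ℕ) where
  P : HPath S
  Q : HPath S
  y : V
  z : V
  hy : P.first = y
  hz : Q.first = z
  he : s(y, z) ∈ S.Estar ℓ
  hPU : P.last ∈ S.U
  hQU : Q.last ∈ S.U
  hne : P.last ≠ Q.last
  hdisj : ∀ v ∈ P.verts, v ∉ Q.verts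

/-- `T` respects an `H`-path `P` if consecutive vertices of `P` are
child–parent pairs of `T`. -/
def ABT.RespectsPath {S : Sys V} (T : ABT S) (P : HPath S) : Prop :=
  P.verts.Chain' (fun u v => T.par u = v)

/-- `T` respects a double path if it respects both of its constituent paths. -/
def ABT.RespectsDP {S : Sys V} {ℓ : ℕ} (T : ABT S) (D : DoublePath S ℓ) : Prop :=
  T.RespectsPath D.P ∧ T.RespectsPath D.Q

/-- An in-tree of `H` rooted at a free vertex: every non-root vertex has a unique
outgoing `H`-edge inside the tree and all vertices reach the root.  (Paths ending
at a free vertex are a special case.) -/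
structure InTree (S : Sys V) where
  W : Set V
  root : V
  g : V → V
  root_W : root ∈ W
  root_U : root ∈ S.U
  step : ∀ v ∈ W, v ≠ root → S.HStep v (g v) ∧ g v ∈ W
  reach : ∀ v ∈ W, ∃ n : ℕ, g^[n] v = root


/-! Let `q` be the alternating path to `t` that the tree edge `{t, t'}` extends. As
`{t, t'} ∉ M`, `q` has even length `dist^α(t') - 1`, and as `α(t)` is odd there is a
shortest orthodox path `P` to `t` of odd length `|P| ≤ |q|`. Cut `q` at its last entry
`{y, z}` into `T(t)`, `q = q₀ · {y, z} · r`. Vertices of `T(t)` other than `t` are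
orthodoxly farther than `t`, so `P` meets `r` only in `t` and `P · r⁻¹` is an alternating
path to `z` of the parity of `{y, z}`. Hence the incoming edge `{y, z}` of `T(t)` has volume
at most `|q| + |P| ≤ 2|q|`. On the other side, every `x ∈ T(t')` has
`dist^α(x) ≥ dist^α(t') = |q| + 1`, and every edge at `x` has volume at least
`2 dist^α(x)`, because an alternating path to its other endpoint either passes through `x`
or extends to `x`. Levels order edges lexicographically by volume first. -/

theorem SimpleGraph.Walk.exists_eq_concat_of_getLast?_edges {α : Type*} {G : SimpleGraph α}
    {a u : α} {p : G.Walk a u} {e : Sym2 α} (he : p.edges.getLast? = some e) :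
    ∃ (w : α) (q : G.Walk a w) (h : G.Adj w u), p = q.concat h ∧ e = s(w, u) := by
  induction p using Walk.concatRec with
  | Hnil => simp at he
  | @Hconcat a w u q h _ =>
    simp only [Walk.edges_concat, List.concat_eq_append, List.getLast?_append_cons,
      List.getLast?_singleton, Option.some.injEq] at he
    exact ⟨w, q, h, rfl, he.symm⟩

theorem SimpleGraph.Walk.exists_last_entry {α : Type*} {G : SimpleGraph α} {P : α → Prop}
    {a v : α} (p : G.Walk a v) (ha : ¬ P a) (hv : P v) :
    ∃ (y z : α) (h : G.Adj y z) (q : G.Walk a y) (r : G.Walk z v),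
      p = q.append (cons h r) ∧ ¬ P y ∧ ∀ w ∈ r.support, P w := by
  induction p using Walk.concatRec with
  | Hnil => exact absurd hv ha
  | @Hconcat a w v p h ih =>
    by_cases hw : P w
    · obtain ⟨y, z, hyz, q, r, rfl, hy, hr⟩ := ih ha hw
      refine ⟨y, z, hyz, q, r.concat h, (Walk.append_concat _ _ _).symm, hy, ?_⟩
      simp only [Walk.support_concat, List.mem_append, List.mem_singleton]
      rintro x (hx | rfl)
      exacts [hr x hx, hv]
    · exact ⟨w, v, h, p, nil, Walk.concat_eq_append p h, hw, by simpa using hv⟩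

namespace Sys

variable {S : Sys V}

theorem isAltPath_def {a b : V} (p : S.G.Walk a b) :
    S.IsAltPath p ↔
      p.IsPath ∧ p.edges.IsChain (fun e₁ e₂ => (e₁ ∈ S.M ↔ e₂ ∉ S.M)) :=
  Iff.rfl

theorem IsAltPath.of_append_left {a b c : V} {p : S.G.Walk a b} {q : S.G.Walk b c}
    (h : S.IsAltPath (p.append q)) : S.IsAltPath p := by
  rw [isAltPath_def, Walk.edges_append, List.isChain_append] at h
  exact ⟨h.1.of_append_left, h.2.1⟩

theorem IsAltPath.isChain_of_append_right {a b c : V} {p : S.G.Walk a b} {q : S.G.Walk b c}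
    (h : S.IsAltPath (p.append q)) :
    q.edges.IsChain (fun e₁ e₂ => (e₁ ∈ S.M ↔ e₂ ∉ S.M)) := by
  rw [isAltPath_def, Walk.edges_append, List.isChain_append] at h
  exact h.2.2.1

theorem IsAltPath.takeUntil {a b u : V} {p : S.G.Walk a b} (hp : S.IsAltPath p)
    (hu : u ∈ p.support) : S.IsAltPath (p.takeUntil u hu) :=
  IsAltPath.of_append_left (q := p.dropUntil u hu) ((p.take_spec hu).symm ▸ hp)

theorem isAltPath_concat_iff_getLast?_edges {a w u : V} (p : S.G.Walk a w) (h : S.G.Adj w u) :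
    S.IsAltPath (p.concat h) ↔ S.IsAltPath p ∧ u ∉ p.support ∧
      ∀ e ∈ p.edges.getLast?, (e ∈ S.M ↔ s(w, u) ∉ S.M) := by
  simp only [isAltPath_def, Walk.concat_isPath_iff, Walk.edges_concat, List.concat_eq_append,
    List.isChain_append, List.isChain_singleton, List.head?_cons, Option.mem_def,
    Option.some.injEq, forall_eq', true_and]
  tauto

variable (S) in
theorem isAltPath_concat_iff {a w u : V} (ha : ∀ e ∈ S.M, a ∉ e) (p : S.G.Walk a w)
    (h : S.G.Adj w u) :
    S.IsAltPath (p.concat h) ↔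
      S.IsAltPath p ∧ u ∉ p.support ∧ (s(w, u) ∈ S.M ↔ Odd p.length) := by
  induction p using Walk.concatRec generalizing u with
  | @Hnil a =>
    have hM : s(a, u) ∉ S.M := fun hM => ha _ hM (Sym2.mem_mk_left a u)
    simp [isAltPath_def, hM, Walk.concat_nil, Walk.cons_isPath_iff, eq_comm]
  | @Hconcat a v w p h' ih =>
    rw [isAltPath_concat_iff_getLast?_edges]
    simp only [Walk.edges_concat, List.concat_eq_append, List.getLast?_append_cons,
      List.getLast?_singleton, Option.mem_def, Option.some.injEq, forall_eq',
      Walk.length_concat, Nat.odd_add_one]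
    refine and_congr_right fun hp => and_congr_right fun _ => ?_
    have := ((ih ha h').mp hp).2.2
    tauto

theorem IsAltPath.mem_M_iff_even_of_getLast? {u : V} {p : S.G.Walk S.f u} (hp : S.IsAltPath p)
    {e : Sym2 V} (he : p.edges.getLast? = some e) : e ∈ S.M ↔ Even p.length := by
  obtain ⟨w, q, h, rfl, rfl⟩ := Walk.exists_eq_concat_of_getLast?_edges he
  rw [((S.isAltPath_concat_iff S.f_free q h).mp hp).2.2, Walk.length_concat, Nat.even_add_one,
    Nat.not_even_iff_odd]

theorem isAltPath_append_reverse {z t : V} {p : S.G.Walk S.f z} {r : S.G.Walk z t}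
    {P : S.G.Walk S.f t} (hpr : S.IsAltPath (p.append r)) (hpr_even : Even (p.append r).length)
    (hP : S.IsAltPath P) (hP_odd : Odd P.length)
    (hdisj : ∀ w ∈ r.support, w ∈ P.support → w = t) :
    S.IsAltPath (P.append r.reverse) := by
  have hr : r.reverse.IsPath := hpr.1.of_append_right.reverse
  refine (isAltPath_def _).mpr ⟨?_, ?_⟩
  · rw [Walk.isPath_def, Walk.support_append]
    refine hP.1.support_nodup.append hr.support_nodup.tail fun w hwP hwr => ?_
    have ht : t ∉ r.reverse.support.tail := by
      have := hr.support_nodup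
      rw [← Walk.cons_tail_support, List.nodup_cons] at this
      exact this.1
    have hw : w ∈ r.support := by
      rw [← List.mem_reverse, ← Walk.support_reverse]
      exact List.mem_of_mem_tail hwr
    exact ht (hdisj w hw hwP ▸ hwr)
  · rw [Walk.edges_append, Walk.edges_reverse, List.isChain_append, List.isChain_reverse]
    refine ⟨hP.2, hpr.isChain_of_append_right.imp fun _ _ h => by tauto, ?_⟩
    -- the odd path `P` ends unmatched, the even path `p · r` ends matched
    intro x hx y hy
    rw [List.head?_reverse] at hy
    have hxM := (hP.mem_M_iff_even_of_getLast? hx).not.mpr (Nat.not_even_iff_odd.mpr hP_odd)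
    have hyM := (hpr.mem_M_iff_even_of_getLast? (by
      rw [Walk.edges_append]; exact List.mem_getLast?_append_of_mem_getLast? hy)).mpr hpr_even
    tauto

variable (S)

theorem adist_le_length {θ : Bool} {u : V} {p : S.G.Walk S.f u} (hp : S.IsAltPath p)
    (hθ : Odd p.length ↔ θ = true) : S.adist θ u ≤ p.length :=
  sInf_le ⟨p, hp, rfl, hθ⟩

theorem exists_isAltPath_length_eq_adist {θ : Bool} {u : V} (h : S.adist θ u ≠ ⊤) :
    ∃ p : S.G.Walk S.f u, S.IsAltPath p ∧ (p.length : ℕ∞) = S.adist θ u ∧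
      (Odd p.length ↔ θ = true) := by
  have hne : Set.Nonempty {n : ℕ∞ | ∃ p : S.G.Walk S.f u,
      S.IsAltPath p ∧ (p.length : ℕ∞) = n ∧ (Odd p.length ↔ θ = true)} :=
    Set.nonempty_iff_ne_empty.mpr fun hempty => h (by rw [adist, hempty, sInf_empty])
  exact csInf_mem hne

theorem adist_lt_card {θ : Bool} {u : V} (h : S.adist θ u ≠ ⊤) :
    S.adist θ u < Fintype.card V := by
  obtain ⟨p, hp, hlen, -⟩ := S.exists_isAltPath_length_eq_adist h
  rw [← hlen]
  exact_mod_cast hp.1.length_lt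

theorem rho_eq_true {e : Sym2 V} : S.rho e = true ↔ e ∈ S.M := by
  simp [rho]

theorem distOrth_le_adist (θ : Bool) (u : V) : S.distOrth u ≤ S.adist θ u := by
  unfold distOrth op
  split_ifs with h <;> cases θ
  exacts [h.le, le_rfl, le_rfl, not_lt.mp h]

theorem distOrth_le_length {u : V} {p : S.G.Walk S.f u} (hp : S.IsAltPath p) :
    S.distOrth u ≤ p.length :=
  (S.distOrth_le_adist (decide (Odd p.length)) u).trans (S.adist_le_length hp (by simp))

theorem exists_isAltPath_odd_of_op {u : V} (hu : S.op u = true) :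
    ∃ p : S.G.Walk S.f u,
      S.IsAltPath p ∧ Odd p.length ∧ (p.length : ℕ∞) = S.distOrth u := by
  have hlt : S.adist true u < S.adist false u := by
    by_contra h
    simp [op, h] at hu
  obtain ⟨p, hp, hlen, hodd⟩ := S.exists_isAltPath_length_eq_adist hlt.ne_top
  exact ⟨p, hp, hodd.mpr rfl, by rw [hlen, distOrth, hu]⟩

theorem distOrth_le_adist_rho_add_one {x y : V} (h : S.G.Adj y x) :
    S.distOrth x ≤ S.adist (S.rho s(y, x)) y + 1 := by
  by_cases htop : S.adist (S.rho s(y, x)) y = ⊤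
  · simp [htop]
  obtain ⟨p, hp, hlen, hpar⟩ := S.exists_isAltPath_length_eq_adist htop
  rw [← hlen]
  by_cases hx : x ∈ p.support
  · calc S.distOrth x ≤ (p.takeUntil x hx).length := S.distOrth_le_length (hp.takeUntil hx)
      _ ≤ p.length := by exact_mod_cast p.length_takeUntil_le_length hx
      _ ≤ p.length + 1 := le_self_add
  · have hext : S.IsAltPath (p.concat h) := by
      refine (S.isAltPath_concat_iff S.f_free p h).mpr ⟨hp, hx, ?_⟩
      rw [hpar, rho_eq_true]
    simpa using S.distOrth_le_length hext

theorem vlevel_mk (y z : V) :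
    S.vlevel s(y, z) = S.adist (S.rho s(y, z)) y + S.adist (S.rho s(y, z)) z + 1 :=
  rfl

theorem hlevel_mk (y z : V) :
    S.hlevel s(y, z) = max (S.adist (S.rho s(y, z)) y) (S.adist (S.rho s(y, z)) z) :=
  rfl

theorem two_mul_distOrth_le_vlevel {x : V} {e : Sym2 V} (he : e ∈ S.G.edgeSet) (hx : x ∈ e) :
    2 * S.distOrth x ≤ S.vlevel e := by
  obtain ⟨y, rfl⟩ := Sym2.mem_iff_exists.mp hx
  have hy := S.distOrth_le_adist_rho_add_one (S.G.mem_edgeSet.mp he).symm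
  rw [Sym2.eq_swap] at hy
  calc 2 * S.distOrth x = S.distOrth x + S.distOrth x := two_mul _
    _ ≤ _ := add_le_add (S.distOrth_le_adist _ x) hy
    _ = S.vlevel s(x, y) := by rw [vlevel_mk, add_assoc]

theorem hlevel_lt_card_add_one {e : Sym2 V} (he : S.vlevel e ≠ ⊤) :
    S.hlevel e < Fintype.card V + 1 := by
  induction e using Sym2.ind with
  | _ y z =>
    simp only [vlevel_mk, ne_eq, ENat.add_eq_top, not_or] at he
    rw [hlevel_mk]
    exact (max_lt (S.adist_lt_card he.1.1) (S.adist_lt_card he.1.2)).trans_le le_self_add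

theorem level_lt_level_of_vlevel_lt {e₁ e₂ : Sym2 V} (h : S.vlevel e₁ < S.vlevel e₂) :
    S.level e₁ < S.level e₂ := by
  set C : ℕ∞ := ((Fintype.card V + 1 : ℕ) : ℕ∞)
  have hC : C * S.vlevel e₁ ≠ ⊤ := WithTop.mul_ne_top (ENat.natCast_ne_top _) h.ne_top
  calc S.level e₁ < C * S.vlevel e₁ + C := by
        refine (ENat.add_lt_add_iff_left hC).mpr ?_
        simpa [C] using S.hlevel_lt_card_add_one h.ne_top
    _ = C * (S.vlevel e₁ + 1) := by ring
    _ ≤ C * S.vlevel e₂ := by gcongr; exact Order.add_one_le_of_lt h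
    _ ≤ S.level e₂ := le_self_add

end Sys

namespace ABT

variable {S : Sys V} (T : ABT S)

theorem exists_isAltPath_concat_par {u : V} (hu : u ≠ S.f) :
    ∃ (q : S.G.Walk S.f (T.par u)) (h : S.G.Adj (T.par u) u),
      S.IsAltPath (q.concat h) ∧ ((q.length + 1 : ℕ) : ℕ∞) = S.distOrth u := by
  obtain ⟨p, hp, hlen, hlast⟩ := T.par_mem u hu
  obtain ⟨w, q, h, rfl, hw⟩ := Walk.exists_eq_concat_of_getLast?_edges hlast
  obtain rfl := Sym2.congr_left.mp hw
  exact ⟨q, h, hp, by rw [← hlen, Walk.length_concat]⟩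

theorem mk_par_mem_M_iff {u : V} (hu : u ≠ S.f) {n : ℕ} (hn : (n : ℕ∞) = S.distOrth u) :
    s(T.par u, u) ∈ S.M ↔ Even n := by
  obtain ⟨q, h, hq, hlen⟩ := T.exists_isAltPath_concat_par hu
  obtain rfl : q.length + 1 = n := by exact_mod_cast hlen.trans hn.symm
  rw [((S.isAltPath_concat_iff S.f_free q h).mp hq).2.2, Nat.even_add_one, Nat.not_even_iff_odd]

theorem distOrth_par_lt {u : V} (hu : u ≠ S.f) : S.distOrth (T.par u) < S.distOrth u := by
  obtain ⟨q, h, hq, hlen⟩ := T.exists_isAltPath_concat_par hu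
  rw [← hlen]
  calc S.distOrth (T.par u) ≤ q.length :=
        S.distOrth_le_length ((S.isAltPath_concat_iff S.f_free q h).mp hq).1
    _ < ((q.length + 1 : ℕ) : ℕ∞) := by exact_mod_cast q.length.lt_succ_self

theorem inSub_self (t : V) : T.inSub t t := ⟨0, rfl⟩

theorem inSub_f_iff {t : V} : T.inSub t S.f ↔ t = S.f :=
  ⟨fun ⟨n, hn⟩ => hn.symm.trans (Function.iterate_fixed T.par_f n),
    fun h => h ▸ T.inSub_self _⟩

theorem inSub_of_inSub_par {t v : V} (h : T.inSub t (T.par v)) : T.inSub t v :=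
  let ⟨n, hn⟩ := h
  ⟨n + 1, hn⟩

theorem distOrth_lt_of_inSub {t v : V} (ht : t ≠ S.f) (h : T.inSub t v) (hne : v ≠ t) :
    S.distOrth t < S.distOrth v := by
  obtain ⟨n, hn⟩ := h
  induction n generalizing v with
  | zero => exact absurd hn hne
  | succ n ih =>
    have hv : v ≠ S.f := by
      rintro rfl
      exact ht (T.inSub_f_iff.mp ⟨_, hn⟩)
    rw [Function.iterate_succ_apply] at hn
    obtain hpar | hpar := eq_or_ne (T.par v) t
    · exact hpar ▸ T.distOrth_par_lt hv
    · exact (ih hpar hn).trans (T.distOrth_par_lt hv)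

theorem distOrth_le_of_inSub {t v : V} (ht : t ≠ S.f) (h : T.inSub t v) :
    S.distOrth t ≤ S.distOrth v := by
  obtain rfl | hne := eq_or_ne v t
  · exact le_rfl
  · exact (T.distOrth_lt_of_inSub ht h hne).le

theorem eq_of_mem_support_of_inSub {t w : V} (ht : t ≠ S.f) {p : S.G.Walk S.f t}
    (hp : S.IsAltPath p) (hlen : (p.length : ℕ∞) = S.distOrth t) (hw : w ∈ p.support)
    (hsub : T.inSub t w) : w = t := by
  by_contra hne
  have hlt := (T.distOrth_lt_of_inSub ht hsub hne).trans_le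
    (S.distOrth_le_length (hp.takeUntil hw))
  rw [← hlen] at hlt
  exact hlt.not_ge (by exact_mod_cast p.length_takeUntil_le_length hw)

theorem eq_of_isTreeEdge {t y z : V} (hy : ¬ T.inSub t y) (hz : T.inSub t z)
    (he : T.IsTreeEdge s(y, z)) : z = t ∧ y = T.par t := by
  obtain ⟨u, -, hu⟩ := he
  rcases Sym2.eq_iff.mp hu with ⟨rfl, rfl⟩ | ⟨rfl, rfl⟩
  · exact absurd (T.inSub_of_inSub_par hz) hy
  · obtain ⟨_ | n, hn⟩ := hz
    · exact ⟨hn, hn ▸ rfl⟩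
    · exact absurd ⟨n, hn⟩ hy

theorem exists_incoming_vlevel_le {t : V} {P₀ P₁ : S.G.Walk S.f t}
    (h₀ : S.IsAltPath P₀) (h₀even : Even P₀.length)
    (h₁ : S.IsAltPath P₁) (h₁odd : Odd P₁.length)
    (h₁len : (P₁.length : ℕ∞) = S.distOrth t) :
    ∃ e, T.Incoming t e ∧ S.vlevel e ≤ P₀.length + P₁.length := by
  have ht : t ≠ S.f := by
    rintro rfl
    rw [Walk.length_eq_zero_iff.mpr (Walk.isPath_iff_nil.mp h₁.1)] at h₁odd
    exact Nat.not_odd_zero h₁odd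
  obtain ⟨y, z, hyz, q, r, rfl, hy, hr⟩ :=
    P₀.exists_last_entry (P := T.inSub t) (mt T.inSub_f_iff.mp ht) (T.inSub_self t)
  have hz : T.inSub t z := hr z r.start_mem_support
  rw [← Walk.concat_append] at h₀ h₀even
  obtain ⟨hq, -, hyzM⟩ := (S.isAltPath_concat_iff S.f_free q hyz).mp h₀.of_append_left
  have hQ : S.IsAltPath (P₁.append r.reverse) :=
    S.isAltPath_append_reverse h₀ h₀even h₁ h₁odd
      fun w hw hwP => T.eq_of_mem_support_of_inSub ht h₁ h₁len hwP (hr w hw)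
  rw [Walk.length_append, Walk.length_concat] at h₀even
  -- `{par t, t}` would end the even path `P₀` with a matched edge, but as the tree edge of `t`,
  -- whose orthodox distance `|P₁|` is odd, it is unmatched
  have hnotree : ¬ T.IsTreeEdge s(y, z) := by
    intro htree
    obtain ⟨rfl, rfl⟩ := T.eq_of_isTreeEdge hy hz htree
    have hr₀ : r.length = 0 :=
      Walk.length_eq_zero_iff.mpr (Walk.isPath_iff_nil.mp h₀.1.of_append_right)
    rw [hr₀, add_zero, Nat.even_add_one, Nat.not_even_iff_odd, ← hyzM,
      T.mk_par_mem_M_iff ht h₁len] at h₀even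
    exact Nat.not_even_iff_odd.mpr h₁odd h₀even
  refine ⟨s(y, z), ⟨S.G.mem_edgeSet.mpr hyz, hnotree, y, z, rfl, hz, hy⟩, ?_⟩
  have hy' : S.adist (S.rho s(y, z)) y ≤ q.length :=
    S.adist_le_length hq (by rw [S.rho_eq_true, hyzM])
  have hz' : S.adist (S.rho s(y, z)) z ≤ (P₁.append r.reverse).length :=
    S.adist_le_length hQ (by
      rw [S.rho_eq_true, hyzM, Walk.length_append, Walk.length_reverse]
      simp only [Nat.odd_iff, Nat.even_iff] at h₀even h₁odd ⊢
      omega)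
  rw [S.vlevel_mk]
  calc _ ≤ (q.length : ℕ∞) + (P₁.append r.reverse).length + 1 := by gcongr
    _ = _ := by
      simp only [Walk.length_append, Walk.length_reverse, Walk.length_cons]
      push_cast
      ring

theorem IsMIE.vlevel_le {T : ABT S} {t : V} {e e' : Sym2 V} (he : T.IsMIE t e)
    (he' : T.Incoming t e') : S.vlevel e ≤ S.vlevel e' :=
  not_lt.mp fun hlt => (he.2 e' he').not_gt (S.level_lt_level_of_vlevel_lt hlt)

end ABT

/-- Let `t` have odd orthodox parity, `t'` be a child of `t` with `{t,t'} ∉ M`, and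
`e` any edge of `G` incident to a vertex of the subtree `T(t')`.  Then
`vlevel(e) > vlevel(e*(t))` (hence also `level(e) > level(e*(t))`) for any
minimum-level incoming edge `e*(t)` of `T(t)`. -/
theorem stmt8 (S : Sys V) (T : ABT S) (t t' : V)
    (hchild : t' ≠ S.f ∧ T.par t' = t) (hα : S.op t = true)
    (hm : s(t, t') ∉ S.M)
    (e : Sym2 V) (hedge : e ∈ S.G.edgeSet) (x : V) (hx : x ∈ e) (hsub : T.inSub t' x)
    (estar : Sym2 V) (hestar : T.IsMIE t estar) :
    S.vlevel estar < S.vlevel e ∧ S.level estar < S.level e := by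
  obtain ⟨ht', rfl⟩ := hchild
  obtain ⟨q, h, hqh, hlen⟩ := T.exists_isAltPath_concat_par ht'
  obtain ⟨hq, -, hqM⟩ := (S.isAltPath_concat_iff S.f_free q h).mp hqh
  obtain ⟨P, hP, hPodd, hPlen⟩ := S.exists_isAltPath_odd_of_op hα
  obtain ⟨e₀, he₀, hvol₀⟩ := T.exists_incoming_vlevel_le hq
    (Nat.not_odd_iff_even.mp (hqM.not.mp hm)) hP hPodd hPlen
  have hPq : P.length ≤ q.length := by exact_mod_cast hPlen ▸ S.distOrth_le_length hq
  have hvol : S.vlevel estar < S.vlevel e := calc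
    S.vlevel estar ≤ S.vlevel e₀ := hestar.vlevel_le he₀
    _ ≤ q.length + P.length := hvol₀
    _ < 2 * ((q.length + 1 : ℕ) : ℕ∞) := by norm_cast; omega
    _ ≤ 2 * S.distOrth x := by rw [hlen]; gcongr; exact T.distOrth_le_of_inSub ht' hsub
    _ ≤ S.vlevel e := S.two_mul_distOrth_le_vlevel hedge hx
  exact ⟨hvol, S.level_lt_level_of_vlevel_lt hvol⟩
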